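/- arXiv:2402.05984 — 2 statements merged into one kernel-verified Lean document; each statement's English description precedes it below -/
import Mathlib

section
/- Let G be the graph with vertex set T and edges {t't : t' ∈ A*_t}. Let t, t' ∈ T be incomparable in the extension order, let α ∈ dom(t) ∩ dom(t') be minimal with t(α) ≠ t'(α), and set s := t↾(α+1). Then any family of pairwise internally disjoint t–t' paths in G has at most last(s) members; in particular there are only finitely many independent t–t' paths in G. -/
/-- An element of the tree `T`: an injective, co-infinite sequence `t : α → ℕ`
(with `ℕ = {1,2,3,…}`) of countable ordinal length `α`.  We encode such a
sequence as a total function `f : Ordinal → ℕ` taking a *positive* value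
exactly on the ordinals `β < len` (the value `0` plays the role of
"undefined", which is harmless since the paper's `ℕ` starts at `1`). -/
structure CSeq where
  /-- the length (domain) of the sequence, a countable ordinal -/
  len : Ordinal
  len_countable : len < Ordinal.omega 1
  /-- the sequence itself, with `f β = 0` meaning "β is outside the domain" -/
  f : Ordinal → ℕ
  dom_iff : ∀ β, β < len ↔ f β ≠ 0
  inj : ∀ β γ, β < len → γ < len → f β = f γ → β = γ
  coinf : {n : ℕ | n ≠ 0 ∧ n ∉ Set.range f}.Infinite

namespace CSeq

/-- the extension order on `T`: `s ≤ t` iff `s = t ↾ dom s`. -/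
def Ext (s t : CSeq) : Prop := ∀ β, s.f β ≠ 0 → t.f β = s.f β

/-- strict extension: `s < t`. -/
def ExtLt (s t : CSeq) : Prop := s.Ext t ∧ s ≠ t

/-- the image `im t ⊆ ℕ = {1,2,…}` of a sequence `t`. -/
def im (t : CSeq) : Set ℕ := {n | n ≠ 0 ∧ n ∈ Set.range t.f}

/-- `t ∈ Σ(T)`: the length of `t` is a successor ordinal. -/
def IsSucc (t : CSeq) : Prop := ∃ α, t.len = α + 1

/-- `last t`: the last value of a sequence (of successor length). -/
noncomputable def lastVal (t : CSeq) : ℕ := t.f (Ordinal.pred t.len)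

/-- the restriction `t ↾ γ` of a sequence `t` to an initial segment `γ ≤ dom t`. -/
noncomputable def restrict (t : CSeq) (γ : Ordinal) (h : γ ≤ t.len) : CSeq where
  len := γ
  len_countable := lt_of_le_of_lt h t.len_countable
  f := fun β => if β < γ then t.f β else 0
  dom_iff := by
    intro β
    constructor
    · intro hβ
      simpa [hβ] using (t.dom_iff β).1 (lt_of_lt_of_le hβ h)
    · intro hβ
      by_contra hc
      simp [hc] at hβ
  inj := by
    intro β γ' hβ hγ
    simp only [if_pos hβ, if_pos hγ]
    exact t.inj β γ' (lt_of_lt_of_le hβ h) (lt_of_lt_of_le hγ h)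
  coinf := t.coinf.mono (by
    rintro n ⟨hn0, hn⟩
    refine ⟨hn0, ?_⟩
    rintro ⟨β, hβ⟩
    by_cases hb : β < γ
    · exact hn ⟨β, by simpa [hb] using hβ⟩
    · simp only [if_neg hb] at hβ
      exact hn0 hβ.symm)

/-- `t* := t ↾ α` for `t` of successor length `α + 1`: the immediate
predecessor of `t` in the tree. -/
noncomputable def star (t : CSeq) : CSeq := t.restrict (Ordinal.pred t.len) (Ordinal.pred_le_self _)

/-- `A_t := {s ≤ t : s ∈ Σ(T), last s = min (im t \ im s*)}`. -/
def A (t : CSeq) : Set CSeq :=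
  {s | s.Ext t ∧ s.IsSucc ∧ s.lastVal = sInf (t.im \ s.star.im)}

/-- `A*_t := {s* : s ∈ A_t}`. -/
def Astar (t : CSeq) : Set CSeq := star '' A t

/-- the graph `G` with vertex set `T` and edges `{t't : t' ∈ A*_t}`. -/
def G : SimpleGraph CSeq := SimpleGraph.fromRel (fun t' t => t' ∈ Astar t)

/-- the graph `G'` with vertex set `T` and edges `{t't : t' ∈ A_t}`. -/
def G' : SimpleGraph CSeq := SimpleGraph.fromRel (fun t' t => t' ∈ A t)

/-- two `t`–`t'` paths are independent (internally disjoint) if they share no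
vertices other than `t` and `t'`. -/
def InternallyDisjoint {t t' : CSeq} (p q : G.Path t t') : Prop :=
  ∀ v, v ∈ p.1.support → v ∈ q.1.support → v = t ∨ v = t'

/-- `t'` is a `k`-extension of `t ∈ Σ(T)` if `t' > t` and every element of
`im t' \ im t` is greater than `a_{k+1}`, where `a_1 < … < a_{k+1}` are the
`k+1` smallest elements of `ℕ \ (im t ∪ [last t])`.  (Recall `Nat.nth p k` is
the `(k+1)`-st element of `{n | p n}` in increasing order.) -/
def IsKExt (k : ℕ) (t t' : CSeq) : Prop :=
  t.ExtLt t' ∧ ∀ n ∈ t'.im \ t.im,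
    Nat.nth (fun m => m ∉ t.im ∧ t.lastVal < m) k < n

end CSeq

namespace CSeq

theorem my_ext' {a b : CSeq} (h1 : a.len = b.len) (h2 : a.f = b.f) : a = b := by
  cases a; cases b; cases h1; cases h2; rfl

theorem my_ext_trans {a b c : CSeq} (hab : a.Ext b) (hbc : b.Ext c) : a.Ext c := by
  intro β h
  have hb : b.f β ≠ 0 := by rw [hab β h]; exact h
  rw [hbc β hb, hab β h]

theorem my_restrict_ext (t : CSeq) (γ : Ordinal) (h : γ ≤ t.len) :
    (t.restrict γ h).Ext t := by
  intro β hβ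
  by_cases hb : β < γ
  · simp [restrict, hb]
  · simp [restrict, hb] at hβ

theorem my_star_ext (w : CSeq) : w.star.Ext w := my_restrict_ext _ _ _

/-- Every `t`–`t'` path contains an internal vertex `r = t ↾ ξ` with `ξ ≤ α`
and `t(ξ) ≤ t(α)`. -/
theorem my_crossing (t t' : CSeq) (α : Ordinal) (hαt : α < t.len)
    (hne : t.f α ≠ t'.f α) (s : CSeq) (hs : s.Ext t) (hslen : s.len = α + 1)
    (p : G.Path t t') :
    ∃ r ∈ p.1.support, ∃ ξ, ξ ≤ α ∧ r.len = ξ ∧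
      (∀ β, r.f β = if β < ξ then t.f β else 0) ∧ t.f ξ ≤ t.f α := by
  classical
  have hα1 : α < s.len := by
    rw [hslen, Ordinal.add_one_eq_succ]; exact Order.lt_succ α
  have hsα0 : s.f α ≠ 0 := (s.dom_iff α).1 hα1
  have hsfα : t.f α = s.f α := hs α hsα0
  set S : Set CSeq := {v | s.Ext v} with hS
  have htS : t ∈ S := hs
  have ht'S : t' ∉ S := by
    intro h
    exact hne (by rw [hsfα, h α hsα0])
  obtain ⟨d, hd, hdf, hds⟩ := p.1.exists_boundary_dart S htS ht'S
  have hadj : G.Adj d.fst d.snd := d.adj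
  simp only [G, SimpleGraph.fromRel_adj] at hadj
  obtain ⟨hne', hcase⟩ := hadj
  rcases hcase with h | h
  · exfalso
    obtain ⟨w, hwA, hw⟩ := h
    have h1 : (star w).Ext d.snd := my_ext_trans (my_star_ext w) hwA.1
    rw [hw] at h1
    exact hds (my_ext_trans hdf h1)
  · obtain ⟨w, hwA, hw⟩ := h
    obtain ⟨hwext, ⟨ξ, hξ⟩, hlast⟩ := hwA
    have hpred : Ordinal.pred w.len = ξ := by
      rw [hξ, Ordinal.add_one_eq_succ, Ordinal.pred_succ]
    have hrf : ∀ β, d.snd.f β = if β < ξ then w.f β else 0 := by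
      intro β
      rw [← hw]
      simp only [star, restrict, hpred]
    have hrlen : d.snd.len = ξ := by
      rw [← hw]
      simp only [star, restrict, hpred]
    have hξw : ξ < w.len := by
      rw [hξ, Ordinal.add_one_eq_succ]; exact Order.lt_succ ξ
    -- values of w below ξ agree with s (hence with t)
    have hwval : ∀ β, β < ξ → β < s.len → w.f β = s.f β := by
      intro β hβξ hβs
      have hβw : β < w.len := hβξ.trans hξw
      have hw0 : w.f β ≠ 0 := (w.dom_iff β).1 hβw
      have e1 : d.fst.f β = w.f β := hwext β hw0
      have hs0 : s.f β ≠ 0 := (s.dom_iff β).1 hβs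
      have e2 : d.fst.f β = s.f β := hdf β hs0
      rw [← e1, e2]
    have hξα : ξ ≤ α := by
      by_contra hc
      push_neg at hc
      apply hds
      intro β hβ0
      have hβs : β < s.len := (s.dom_iff β).2 hβ0
      have hβα : β ≤ α := by
        rw [hslen, Ordinal.add_one_eq_succ, Order.lt_succ_iff] at hβs
        exact hβs
      have hβξ : β < ξ := lt_of_le_of_lt hβα hc
      rw [hrf β, if_pos hβξ, hwval β hβξ hβs]
    -- values below ξ agree with t
    have hwvalt : ∀ β, β < ξ → w.f β = t.f β := by
      intro β hβξ
      have hβs : β < s.len := lt_of_lt_of_le hβξ (le_of_lt (lt_of_le_of_lt hξα hα1))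
      have hs0 : s.f β ≠ 0 := (s.dom_iff β).1 hβs
      rw [hwval β hβξ hβs]
      exact (hs β hs0).symm
    -- compute lastVal w = t.f ξ
    have hξs : ξ < s.len := lt_of_le_of_lt hξα hα1
    have hsξ0 : s.f ξ ≠ 0 := (s.dom_iff ξ).1 hξs
    have hwξ0 : w.f ξ ≠ 0 := (w.dom_iff ξ).1 hξw
    have hwlastval : w.lastVal = t.f ξ := by
      have e1 : d.fst.f ξ = w.f ξ := hwext ξ hwξ0
      have e2 : d.fst.f ξ = s.f ξ := hdf ξ hsξ0
      have e3 : t.f ξ = s.f ξ := hs ξ hsξ0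
      unfold lastVal
      rw [hpred, ← e1, e2, ← e3]
    -- t.f α belongs to d.fst.im \ (star w).im
    rw [hw] at hlast
    have hmem : t.f α ∈ d.fst.im \ d.snd.im := by
      constructor
      · refine ⟨(t.dom_iff α).1 hαt, ⟨α, ?_⟩⟩
        rw [hdf α hsα0, ← hsfα]
      · rintro ⟨h0, β, hβ⟩
        have hβ0 : d.snd.f β ≠ 0 := by rw [hβ]; exact h0
        have hβξ : β < ξ := by
          by_contra hc
          rw [hrf β, if_neg hc] at hβ0
          exact hβ0 rfl
        rw [hrf β, if_pos hβξ, hwvalt β hβξ] at hβ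
        have hβt : β < t.len := lt_trans (lt_of_lt_of_le hβξ hξα) hαt
        have := t.inj β α hβt hαt hβ
        exact absurd this (ne_of_lt (lt_of_lt_of_le hβξ hξα))
    have hle : t.f ξ ≤ t.f α := by
      rw [← hwlastval, hlast]
      exact Nat.sInf_le hmem
    refine ⟨d.snd, SimpleGraph.Walk.dart_snd_mem_support_of_mem_darts p.1 hd,
      ξ, hξα, hrlen, ?_, hle⟩
    intro β
    rw [hrf β]
    by_cases hβξ : β < ξ
    · rw [if_pos hβξ, if_pos hβξ, hwvalt β hβξ]
    · rw [if_neg hβξ, if_neg hβξ]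

end CSeq

open CSeq in
/-- Let `t, t'` be incomparable in the extension order, let
`α ∈ dom t ∩ dom t'` be minimal with `t(α) ≠ t'(α)`, and let `s = t ↾ (α+1)`.
Then any family of pairwise internally disjoint `t`–`t'` paths in `G` has at
most `last s` members; in particular it is finite. -/
theorem stmt7 (t t' : CSeq) (h1 : ¬ t.Ext t') (h2 : ¬ t'.Ext t)
    (α : Ordinal) (hαt : α < t.len) (hαt' : α < t'.len)
    (hne : t.f α ≠ t'.f α) (hmin : ∀ β < α, t.f β = t'.f β)
    (s : CSeq) (hs : s.Ext t) (hslen : s.len = α + 1) :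
    ∀ P : Set (G.Path t t'),
      (∀ p ∈ P, ∀ q ∈ P, p ≠ q → InternallyDisjoint p q) →
      P.encard ≤ (s.lastVal : ℕ∞) ∧ P.Finite := by
  classical
  intro P hP
  have hα1 : α < s.len := by
    rw [hslen, Ordinal.add_one_eq_succ]; exact Order.lt_succ α
  have hsα0 : s.f α ≠ 0 := (s.dom_iff α).1 hα1
  have hsfα : t.f α = s.f α := hs α hsα0
  have hlastval : s.lastVal = t.f α := by
    unfold lastVal
    rw [hslen, Ordinal.add_one_eq_succ, Ordinal.pred_succ, ← hsfα]
  set N := t.f α with hN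
  -- crossing data for every path
  have key : ∀ p : G.Path t t', ∃ rξ : CSeq × Ordinal,
      rξ.1 ∈ p.1.support ∧ rξ.2 ≤ α ∧ rξ.1.len = rξ.2 ∧
      (∀ β, rξ.1.f β = if β < rξ.2 then t.f β else 0) ∧ t.f rξ.2 ≤ N := by
    intro p
    obtain ⟨r, hr, ξ, h1, h2, h3, h4⟩ := my_crossing t t' α hαt hne s hs hslen p
    exact ⟨(r, ξ), hr, h1, h2, h3, h4⟩
  set F : G.Path t t' → ℕ := fun p => t.f (Classical.choose (key p)).2 with hF
  have hmaps : ∀ p : G.Path t t', F p ∈ Finset.Icc 1 N := by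
    intro p
    obtain ⟨hr, h1, h2, h3, h4⟩ := Classical.choose_spec (key p)
    have hξt : (Classical.choose (key p)).2 < t.len := lt_of_le_of_lt h1 hαt
    have : t.f (Classical.choose (key p)).2 ≠ 0 := (t.dom_iff _).1 hξt
    simp only [Finset.mem_Icc, hF]
    exact ⟨Nat.one_le_iff_ne_zero.2 this, h4⟩
  have hinj : Set.InjOn F P := by
    intro p hp q hq hpq
    by_contra hne'
    obtain ⟨hrp, h1p, h2p, h3p, h4p⟩ := Classical.choose_spec (key p)
    obtain ⟨hrq, h1q, h2q, h3q, h4q⟩ := Classical.choose_spec (key q)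
    set rp := (Classical.choose (key p)).1
    set ξp := (Classical.choose (key p)).2
    set rq := (Classical.choose (key q)).1
    set ξq := (Classical.choose (key q)).2
    -- F p = F q forces ξp = ξq by injectivity of t
    have hξeq : ξp = ξq :=
      t.inj ξp ξq (lt_of_le_of_lt h1p hαt) (lt_of_le_of_lt h1q hαt) hpq
    have hreq : rp = rq := by
      refine my_ext' (by rw [h2p, h2q, hξeq]) (funext fun β => ?_)
      rw [h3p β, h3q β, hξeq]
    -- rp is an internal vertex of both paths
    have hboth : rp = t ∨ rp = t' := hP p hp q hq hne' rp hrp (hreq ▸ hrq)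
    rcases hboth with h | h
    · have : rp.len = t.len := by rw [h]
      rw [h2p] at this
      exact absurd hαt (by rw [← this]; exact not_lt.2 h1p)
    · have : rp.len = t'.len := by rw [h]
      rw [h2p] at this
      exact absurd hαt' (by rw [← this]; exact not_lt.2 h1p)
  have himg : F '' P ⊆ ↑(Finset.Icc 1 N) := by
    rintro n ⟨p, _, rfl⟩
    exact hmaps p
  have hcard : P.encard ≤ (N : ℕ∞) := by
    calc P.encard = (F '' P).encard := (hinj.encard_image).symm
      _ ≤ (↑(Finset.Icc 1 N) : Set ℕ).encard := Set.encard_le_encard himg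
      _ = ((Finset.Icc 1 N).card : ℕ∞) := Set.encard_coe_eq_coe_finsetCard _
      _ = (N : ℕ∞) := by rw [Nat.card_Icc]; norm_num
  rw [hlastval]
  exact ⟨hcard, Set.finite_of_encard_le_coe hcard⟩
end

section
/- Let G be the graph with vertex set T and edges {t't : t' ∈ A*_t}. Then G has no proper colouring c : T → ℕ, yet G admits a proper colouring by countable ordinals (so G is uncountably chromatic with chromatic number ℵ₁), and moreover every uncountable set of vertices of G contains two vertices that are connected by only finitely many pairwise internally disjoint paths in G. -/
/-!
An edge of `G` joins `s*` to a proper extension `t` of `s*`, so the length is a proper colouring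
by countable ordinals.

Given `c : T → ℕ`, build `t₀ ≤ t₁ ≤ ⋯` and thresholds `M₀ < M₁ < ⋯`: if colour `n` occurs on an
extension `s` of `tₙ` all of whose new values exceed `Mₙ`, put `tₙ₊₁ = s⌢a` with `a > Mₙ` fresh,
and let `Mₙ₊₁ > a` be a value missing from `tₙ₊₁`. The union `t` is co-infinite (it misses every
`Mₙ₊₁`) and its colour `j = c t` occurs above `(tⱼ, Mⱼ)`, so some `s` of colour `j` has `s⌢a ≤ t`
with `a` the least value of `t` outside `s`: `s` and `t` are adjacent.

A chain in `T` is countable: a non-maximal `t` is determined by the value at position `len t` of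
any longer member. So an uncountable set contains incomparable `t, t'`. Pick `γ` with
`t' γ ≠ t γ`. A `t`–`t'` path leaves the set of sequences agreeing with `t` up to `γ` along an edge
ending at an initial segment `w` of `t` with `t (len w) ≤ t γ`; there are finitely many such `w`,
and internally disjoint paths use different ones.
-/

namespace CSeq

theorem ext {s t : CSeq} (hlen : s.len = t.len) (hf : s.f = t.f) : s = t := by
  cases s; cases t; cases hlen; cases hf; rfl

theorem f_ne_zero {t : CSeq} {β : Ordinal} (h : β < t.len) : t.f β ≠ 0 := (t.dom_iff β).1 h

theorem f_eq_zero {t : CSeq} {β : Ordinal} (h : t.len ≤ β) : t.f β = 0 :=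
  not_not.1 fun h' => (t.dom_iff β).2 h' |>.not_ge h

theorem lt_len_of_f_ne_zero {t : CSeq} {β : Ordinal} (h : t.f β ≠ 0) : β < t.len :=
  (t.dom_iff β).2 h

theorem mem_im {t : CSeq} {n : ℕ} : n ∈ t.im ↔ ∃ β < t.len, t.f β = n :=
  ⟨fun ⟨h0, β, hβ⟩ => ⟨β, lt_len_of_f_ne_zero (hβ ▸ h0), hβ⟩,
    fun ⟨β, hβ, h⟩ => ⟨h ▸ f_ne_zero hβ, β, h⟩⟩

theorem f_mem_im {t : CSeq} {β : Ordinal} (h : β < t.len) : t.f β ∈ t.im := mem_im.2 ⟨β, h, rfl⟩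

theorem Ext.len_le {s t : CSeq} (h : s.Ext t) : s.len ≤ t.len :=
  not_lt.1 fun hlt => f_ne_zero hlt ((h t.len (f_ne_zero hlt)).symm.trans (f_eq_zero le_rfl))

theorem Ext.eq_of_len_eq {s t : CSeq} (h : s.Ext t) (hl : s.len = t.len) : s = t := by
  refine ext hl (funext fun β => ?_)
  by_cases hβ : β < s.len
  · exact (h β (f_ne_zero hβ)).symm
  · rw [f_eq_zero (not_lt.1 hβ), f_eq_zero (hl ▸ not_lt.1 hβ)]

instance : PartialOrder CSeq where
  le := Ext
  le_refl _ _ _ := rfl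
  le_trans _ _ _ hst htu β hβ := (htu β (hst β hβ ▸ hβ)).trans (hst β hβ)
  le_antisymm _ _ hst hts := hst.eq_of_len_eq (hst.len_le.antisymm hts.len_le)

theorem le_iff_ext {s t : CSeq} : s ≤ t ↔ s.Ext t := Iff.rfl

theorem f_eq_of_le {s t : CSeq} (h : s ≤ t) {β : Ordinal} (hβ : β < s.len) : t.f β = s.f β :=
  h β (f_ne_zero hβ)

theorem f_eq_of_le_or_le {s t : CSeq} (h : s ≤ t ∨ t ≤ s) {β : Ordinal} (hs : β < s.len)
    (ht : β < t.len) : s.f β = t.f β :=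
  h.elim (fun h => (f_eq_of_le h hs).symm) (fun h => f_eq_of_le h ht)

theorem len_mono : Monotone len := fun _ _ h => Ext.len_le h

theorem im_mono : Monotone im := by
  intro s t h n hn
  obtain ⟨β, hβ, rfl⟩ := mem_im.1 hn
  exact mem_im.2 ⟨β, hβ.trans_le (len_mono h), f_eq_of_le h hβ⟩

theorem le_of_le_of_len_le {s t u : CSeq} (hs : s ≤ u) (ht : t ≤ u) (hl : s.len ≤ t.len) :
    s ≤ t := fun β hβ =>
  have hβs : β < s.len := lt_len_of_f_ne_zero hβ
  (f_eq_of_le ht (hβs.trans_le hl)).symm.trans (f_eq_of_le hs hβs)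

theorem eq_of_le_of_le_of_len_eq {s t u : CSeq} (hs : s ≤ u) (ht : t ≤ u) (hl : s.len = t.len) :
    s = t :=
  Ext.eq_of_len_eq (le_of_le_of_len_le hs ht hl.le) hl

theorem restrict_le (t : CSeq) (γ : Ordinal) (h : γ ≤ t.len) : t.restrict γ h ≤ t := by
  intro β hβ
  simp only [restrict] at hβ ⊢
  split_ifs at hβ ⊢
  · rfl
  · exact absurd rfl hβ

theorem star_restrict_add_one (t : CSeq) (γ : Ordinal) (h : γ + 1 ≤ t.len) :
    (t.restrict (γ + 1) h).star = t.restrict γ ((le_self_add (a := γ) (b := 1)).trans h) :=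
  eq_of_le_of_le_of_len_eq ((restrict_le _ _ _).trans (restrict_le _ _ _)) (restrict_le _ _ _)
    (Ordinal.pred_add_one γ)

theorem mem_Astar_iff {s t : CSeq} :
    s ∈ Astar t ↔ s ≤ t ∧ s.len < t.len ∧ t.f s.len = sInf (t.im \ s.im) := by
  constructor
  · rintro ⟨r, ⟨hrt, ⟨α, hα⟩, hlast⟩, rfl⟩
    have hstar : r.star.len = α := by simp [star, restrict, hα, Ordinal.pred_add_one]
    have hαr : α < r.len := hα ▸ Order.lt_add_one_iff.2 le_rfl
    refine ⟨(restrict_le _ _ _).trans hrt, hstar ▸ hαr.trans_le (len_mono hrt), ?_⟩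
    rw [← hlast, hstar, f_eq_of_le hrt hαr, lastVal, hα, Ordinal.pred_add_one]
  · rintro ⟨hst, hlt, hmin⟩
    have h : s.len + 1 ≤ t.len := Order.add_one_le_iff.2 hlt
    have hstar : (t.restrict (s.len + 1) h).star = s := by
      rw [star_restrict_add_one]
      exact eq_of_le_of_le_of_len_eq (restrict_le _ _ _) hst rfl
    refine ⟨t.restrict (s.len + 1) h, ⟨restrict_le _ _ _, ⟨s.len, rfl⟩, ?_⟩, hstar⟩
    rw [hstar, ← hmin, lastVal]
    simp [restrict, Ordinal.pred_add_one]

theorem adj_iff {s t : CSeq} : G.Adj s t ↔ s ≠ t ∧ (s ∈ Astar t ∨ t ∈ Astar s) :=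
  SimpleGraph.fromRel_adj _ s t

theorem len_ne_of_adj {s t : CSeq} (h : G.Adj s t) : s.len ≠ t.len := by
  rcases (adj_iff.1 h).2 with h | h
  · exact (mem_Astar_iff.1 h).2.1.ne
  · exact (mem_Astar_iff.1 h).2.1.ne'

theorem countable_of_isChain {A : Set CSeq} (hA : IsChain (· ≤ ·) A) : A.Countable := by
  have eq_of_len_eq : ∀ {s t}, s ∈ A → t ∈ A → s.len = t.len → s = t := fun hs ht hl =>
    (hA.total hs ht).elim (eq_of_le_of_le_of_len_eq · le_rfl hl)
      (eq_of_le_of_le_of_len_eq le_rfl · hl)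
  set B := {t ∈ A | ∃ u ∈ A, t.len < u.len}
  have hB : B.Countable := by
    choose! next hnextA hnext using fun t (ht : t ∈ B) => ht.2
    have key : ∀ t ∈ B, ∀ t' ∈ B, t.len < t'.len → (next t).f t.len ≠ (next t').f t'.len := by
      intro t ht t' ht' hlt heq
      have hlt' : t.len < (next t').len := hlt.trans (hnext t' ht')
      rw [f_eq_of_le_or_le (hA.total (hnextA t ht) (hnextA t' ht')) (hnext t ht) hlt'] at heq
      exact hlt.ne ((next t').inj _ _ hlt' (hnext t' ht') heq)
    refine Set.countable_iff_exists_injOn.2 ⟨fun t => (next t).f t.len, fun t ht t' ht' heq => ?_⟩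
    by_contra hne
    rcases lt_or_gt_of_ne (mt (eq_of_len_eq ht.1 ht'.1) hne) with hlt | hlt
    · exact key t ht t' ht' hlt heq
    · exact key t' ht' t ht hlt heq.symm
  have hAB : (A \ B).Subsingleton := fun t ht t' ht' =>
    eq_of_len_eq ht.1 ht'.1 <| le_antisymm (not_lt.1 fun h => ht'.2 ⟨ht'.1, t, ht.1, h⟩)
      (not_lt.1 fun h => ht.2 ⟨ht.1, t', ht'.1, h⟩)
  exact (hB.union hAB.countable).mono fun t ht => by
    by_cases htB : t ∈ B
    exacts [Or.inl htB, Or.inr ⟨ht, htB⟩]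

theorem finite_of_internallyDisjoint_of_finite_separator {t t' : CSeq} {P : Set (G.Path t t')}
    (hP : ∀ p ∈ P, ∀ q ∈ P, p ≠ q → InternallyDisjoint p q) {S : Set CSeq} (hS : S.Finite)
    (htS : t ∉ S) (ht'S : t' ∉ S) (hsep : ∀ p : G.Path t t', ∃ v ∈ S, v ∈ p.1.support) :
    P.Finite := by
  choose v hvS hvp using hsep
  refine Set.Finite.of_injOn (fun p _ => hvS p) (fun p hp q hq hpq => ?_) hS
  by_contra hne
  rcases hP p hp q hq hne (v p) (hvp p) (hpq ▸ hvp q) with h | h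
  · exact htS (h ▸ hvS p)
  · exact ht'S (h ▸ hvS p)

theorem finite_initialSegments (t : CSeq) (N : ℕ) :
    {w | w ≤ t ∧ w.len < t.len ∧ t.f w.len ≤ N}.Finite := by
  refine Set.Finite.of_injOn (f := fun w => t.f w.len) (fun w hw => Set.mem_Iic.2 hw.2.2)
    (fun w hw w' hw' heq => ?_) (Set.finite_Iic N)
  exact eq_of_le_of_le_of_len_eq hw.1 hw'.1 (t.inj _ _ hw.2.1 hw'.2.1 heq)

/-- The edge cannot go down from `v`, so `w ∈ A*_v`; then `t (len w)` is the least value of `v`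
outside `w`, and `t γ` is such a value. -/
theorem le_and_f_len_le_of_adj {t v w : CSeq} {γ : Ordinal} (hγ : γ < t.len)
    (hv : ∀ β ≤ γ, v.f β = t.f β) (hw : ¬ ∀ β ≤ γ, w.f β = t.f β) (hadj : G.Adj v w) :
    w ≤ t ∧ w.len < t.len ∧ t.f w.len ≤ t.f γ := by
  have hγv : γ < v.len := lt_len_of_f_ne_zero (hv γ le_rfl ▸ f_ne_zero hγ)
  rcases (adj_iff.1 hadj).2 with hvw | hwv
  · exact absurd (fun β hβ => (f_eq_of_le (mem_Astar_iff.1 hvw).1 (hβ.trans_lt hγv)).trans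
      (hv β hβ)) hw
  obtain ⟨hwv, -, hmin⟩ := mem_Astar_iff.1 hwv
  have hwγ : w.len ≤ γ := not_lt.1 fun h => hw fun β hβ =>
    (f_eq_of_le hwv (hβ.trans_lt h)).symm.trans (hv β hβ)
  have hwt : w ≤ t := fun β hβ => by
    have hβw := lt_len_of_f_ne_zero hβ
    rw [← hv β (hβw.le.trans hwγ), f_eq_of_le hwv hβw]
  refine ⟨hwt, hwγ.trans_lt hγ, ?_⟩
  have hγw : t.f γ ∉ w.im := fun h => by
    obtain ⟨β, hβ, hβγ⟩ := mem_im.1 h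
    rw [f_eq_of_le hwt hβ |>.symm] at hβγ
    exact (hβ.trans_le hwγ).ne (t.inj _ _ (hβ.trans_le hwγ |>.trans hγ) hγ hβγ)
  rw [← hv _ hwγ, hmin]
  exact Nat.sInf_le ⟨hv γ le_rfl ▸ f_mem_im hγv, hγw⟩

theorem finite_internallyDisjoint_of_not_le {t t' : CSeq} (h : ¬ t ≤ t') (h' : ¬ t' ≤ t)
    {P : Set (G.Path t t')} (hP : ∀ p ∈ P, ∀ q ∈ P, p ≠ q → InternallyDisjoint p q) :
    P.Finite := by
  obtain ⟨γ, hγ, hγt'⟩ : ∃ γ, t.f γ ≠ 0 ∧ t'.f γ ≠ t.f γ := by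
    simpa [le_iff_ext, Ext] using h
  set Q := {v : CSeq | ∀ β ≤ γ, v.f β = t.f β}
  refine finite_of_internallyDisjoint_of_finite_separator hP (finite_initialSegments t (t.f γ))
    (fun ht => ht.2.1.false) (fun ht' => h' ht'.1) fun p => ?_
  obtain ⟨d, hd, hdQ, hdQ'⟩ :=
    p.1.exists_boundary_dart Q (fun _ _ => rfl) fun ht' => hγt' (ht' γ le_rfl)
  exact ⟨d.toProd.2, le_and_f_len_le_of_adj (lt_len_of_f_ne_zero hγ) hdQ hdQ' d.adj,
    p.1.dart_snd_mem_support_of_mem_darts hd⟩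

theorem exists_fresh_gt (t : CSeq) (M : ℕ) : ∃ a, M < a ∧ a ≠ 0 ∧ a ∉ t.im := by
  obtain ⟨a, ⟨ha0, ha⟩, hMa⟩ := t.coinf.exists_gt M
  exact ⟨a, hMa, ha0, fun h => ha h.2⟩

def nil : CSeq where
  len := 0
  len_countable := Ordinal.omega_pos 1
  f _ := 0
  dom_iff β := iff_of_false (zero_le (a := β)).not_gt (not_not.2 rfl)
  inj β _ h := absurd h (zero_le (a := β)).not_gt
  coinf := by
    convert (Set.finite_singleton 0).infinite_compl using 1
    ext n
    simp

section snoc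

variable (s : CSeq) (a : ℕ) (ha0 : a ≠ 0) (ha : a ∉ s.im)

noncomputable def snoc : CSeq where
  len := s.len + 1
  len_countable := (Cardinal.isSuccLimit_omega 1).add_one_lt s.len_countable
  f β := if β = s.len then a else s.f β
  dom_iff β := by
    rcases lt_trichotomy β s.len with h | rfl | h
    · simp [h.ne, h.trans_le (le_self_add), f_ne_zero h]
    · simp [ha0]
    · simp [h.ne', f_eq_zero h.le, Order.lt_add_one_iff, h.not_ge]
  inj β γ hβ hγ heq := by
    rw [Order.lt_add_one_iff] at hβ hγ
    have hmem : ∀ δ, δ < s.len → s.f δ ≠ a := fun δ hδ h => ha (h ▸ f_mem_im hδ)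
    split_ifs at heq with h1 h2 h2
    · exact h1.trans h2.symm
    · exact absurd heq.symm (hmem γ (hγ.lt_of_ne h2))
    · exact absurd heq (hmem β (hβ.lt_of_ne h1))
    · exact s.inj β γ (hβ.lt_of_ne h1) (hγ.lt_of_ne h2) heq
  coinf := by
    refine (s.coinf.sdiff (Set.finite_singleton a)).mono ?_
    rintro n ⟨⟨hn0, hn⟩, hna⟩
    refine ⟨hn0, ?_⟩
    rintro ⟨β, hβ⟩
    dsimp only at hβ
    split_ifs at hβ
    exacts [hna hβ.symm, hn ⟨β, hβ⟩]

theorem le_snoc : s ≤ s.snoc a ha0 ha := fun _ hβ => if_neg fun h =>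
  hβ (f_eq_zero h.ge)

theorem snoc_len : (s.snoc a ha0 ha).len = s.len + 1 := rfl

theorem snoc_f_len : (s.snoc a ha0 ha).f s.len = a := if_pos rfl

theorem im_snoc : (s.snoc a ha0 ha).im = insert a s.im := by
  ext n
  simp only [mem_im, snoc_len, Order.lt_add_one_iff, Set.mem_insert_iff]
  constructor
  · rintro ⟨β, hβ, rfl⟩
    rcases hβ.lt_or_eq with hβ | rfl
    · exact Or.inr ⟨β, hβ, (f_eq_of_le (le_snoc s a ha0 ha) hβ).symm⟩
    · exact Or.inl (snoc_f_len s a ha0 ha)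
  · rintro (h | ⟨β, hβ, rfl⟩)
    · exact ⟨s.len, le_rfl, (snoc_f_len s a ha0 ha).trans h.symm⟩
    · exact ⟨β, hβ.le, f_eq_of_le (le_snoc s a ha0 ha) hβ⟩

end snoc

def ExtAbove (M : ℕ) (t s : CSeq) : Prop := t ≤ s ∧ s.im \ t.im ⊆ Set.Ioi M

theorem ExtAbove.refl (M : ℕ) (t : CSeq) : ExtAbove M t t := ⟨le_rfl, fun _ hv => absurd hv.1 hv.2⟩

theorem ExtAbove.trans {M M' : ℕ} {t s u : CSeq} (h : ExtAbove M t s) (h' : ExtAbove M' s u)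
    (hM : M ≤ M') : ExtAbove M t u := by
  refine ⟨h.1.trans h'.1, fun v ⟨hvu, hvt⟩ => ?_⟩
  by_cases hvs : v ∈ s.im
  exacts [h.2 ⟨hvs, hvt⟩, hM.trans_lt (h'.2 ⟨hvu, hvs⟩)]

/-- In `s ⌢ a`, the value `a` is the least value outside `s`, and stays so in every extension
whose new values exceed `a`. -/
theorem adj_of_extAbove_snoc {s u : CSeq} {a M : ℕ} {ha0 : a ≠ 0} {ha : a ∉ s.im} (haM : a ≤ M)
    (hu : ExtAbove M (s.snoc a ha0 ha) u) : G.Adj s u := by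
  have hsu := (le_snoc s a ha0 ha).trans hu.1
  have hlen : s.len < u.len := (Order.lt_add_one_iff.2 le_rfl).trans_le (len_mono hu.1)
  have hua : u.f s.len = a := (f_eq_of_le hu.1 (Order.lt_add_one_iff.2 le_rfl)).trans
    (snoc_f_len s a ha0 ha)
  have hmin : u.f s.len = sInf (u.im \ s.im) := by
    refine hua ▸ le_antisymm (le_csInf ⟨a, hua ▸ f_mem_im hlen, ha⟩ fun v ⟨hvu, hvs⟩ => ?_)
      (Nat.sInf_le ⟨hua ▸ f_mem_im hlen, ha⟩)
    by_cases hv : v ∈ (s.snoc a ha0 ha).im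
    · rw [im_snoc] at hv
      exact (hv.resolve_right hvs).ge
    · exact haM.trans (hu.2 ⟨hvu, hv⟩).le
  exact adj_iff.2 ⟨fun h => hlen.ne (congrArg len h), Or.inl (mem_Astar_iff.2 ⟨hsu, hlen, hmin⟩)⟩

theorem exists_upperBound_of_monotone {u : ℕ → CSeq} (hu : Monotone u)
    (hco : {m | m ≠ 0 ∧ ∀ n, m ∉ (u n).im}.Infinite) :
    ∃ w, (∀ n, u n ≤ w) ∧ w.im ⊆ ⋃ n, (u n).im := by
  classical
  set L := ⨆ n, (u n).len
  have hL : ∀ {β}, β < L ↔ ∃ n, β < (u n).len := Ordinal.lt_iSup_iff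
  let F : Ordinal → ℕ := fun β => if h : ∃ n, β < (u n).len then (u (Nat.find h)).f β else 0
  have hF : ∀ {n β}, β < (u n).len → F β = (u n).f β := fun {n β} hβ => by
    have h : ∃ n, β < (u n).len := ⟨n, hβ⟩
    simp only [F, dif_pos h]
    exact (f_eq_of_le (hu (Nat.find_min' h hβ)) (Nat.find_spec h)).symm
  have hF0 : ∀ {β}, F β ≠ 0 → β < L := fun {β} hβ => hL.2 <| by
    by_contra h
    exact hβ (dif_neg h)
  let w : CSeq :=
    { len := L
      len_countable := Ordinal.iSup_lt_omega_one fun n => (u n).len_countable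
      f := F
      dom_iff := fun β => ⟨fun hβ => by
        obtain ⟨_, hn⟩ := hL.1 hβ
        exact hF hn ▸ f_ne_zero hn, hF0⟩
      inj := fun β γ hβ hγ heq => by
        obtain ⟨m, hm⟩ := hL.1 hβ
        obtain ⟨n, hn⟩ := hL.1 hγ
        have hm' := hm.trans_le (len_mono (hu (le_max_left m n)))
        have hn' := hn.trans_le (len_mono (hu (le_max_right m n)))
        rw [hF hm', hF hn'] at heq
        exact (u (max m n)).inj β γ hm' hn' heq
      coinf := hco.mono <| by
        rintro m ⟨hm0, hm⟩
        refine ⟨hm0, ?_⟩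
        rintro ⟨β, hβ⟩
        obtain ⟨n, hn⟩ := hL.1 (hF0 (hβ ▸ hm0))
        exact hm n (mem_im.2 ⟨β, hn, (hF hn).symm.trans hβ⟩) }
  refine ⟨w, fun n β hβ => hF (lt_len_of_f_ne_zero hβ), fun v hv => ?_⟩
  obtain ⟨β, hβ, rfl⟩ := mem_im.1 hv
  obtain ⟨n, hn⟩ := hL.1 hβ
  exact Set.mem_iUnion.2 ⟨n, show F β ∈ _ from hF hn ▸ f_mem_im hn⟩

theorem exists_step (c : CSeq → ℕ) (j : ℕ) (t : CSeq) (M : ℕ) :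
    ∃ p : CSeq × ℕ, ExtAbove M t p.1 ∧ M < p.2 ∧ p.2 ∉ p.1.im ∧
      ∀ s, ExtAbove M t s → c s = j → ∃ s', c s' = j ∧ ∀ u, ExtAbove p.2 p.1 u → G.Adj s' u := by
  by_cases h : ∃ s, ExtAbove M t s ∧ c s = j
  · obtain ⟨s, hs, hcs⟩ := h
    obtain ⟨a, hMa, ha0, ha⟩ := exists_fresh_gt s M
    obtain ⟨b, hab, -, hb⟩ := exists_fresh_gt (s.snoc a ha0 ha) a
    have hsa : ExtAbove M s (s.snoc a ha0 ha) := ⟨le_snoc s a ha0 ha, fun v ⟨hv, hvs⟩ => by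
      rw [im_snoc] at hv
      exact hv.resolve_right hvs ▸ hMa⟩
    exact ⟨(s.snoc a ha0 ha, b), hs.trans hsa le_rfl, hMa.trans hab, hb,
      fun _ _ _ => ⟨s, hcs, fun _ hu => adj_of_extAbove_snoc (ha0 := ha0) (ha := ha) hab.le hu⟩⟩
  · obtain ⟨b, hMb, -, hb⟩ := exists_fresh_gt t M
    exact ⟨(t, b), ExtAbove.refl M t, hMb, hb, fun s hs hcs => absurd ⟨s, hs, hcs⟩ h⟩

noncomputable def stage (c : CSeq → ℕ) : ℕ → CSeq × ℕ
  | 0 => (nil, 0)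
  | n + 1 => (exists_step c n (stage c n).1 (stage c n).2).choose

theorem exists_adj_eq_of_nat (c : CSeq → ℕ) : ∃ s t, G.Adj s t ∧ c s = c t := by
  set t := fun n => (stage c n).1
  set M := fun n => (stage c n).2
  have spec := fun n => (exists_step c n (t n) (M n)).choose_spec
  have hM : StrictMono M := strictMono_nat_of_lt_succ fun n => (spec n).2.1
  have hext : ∀ m n, m ≤ n → ExtAbove (M m) (t m) (t n) := fun m =>
    Nat.le_induction (ExtAbove.refl _ _) fun n hmn ih => ih.trans (spec n).1 (hM.monotone hmn)
  have hfresh : ∀ k n, M (k + 1) ∉ (t n).im := fun k n h => by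
    rcases le_total n (k + 1) with hn | hn
    · exact (spec k).2.2.1 (im_mono (hext _ _ hn).1 h)
    · exact (Set.mem_Ioi.1 ((hext _ _ hn).2 ⟨h, (spec k).2.2.1⟩)).false
  have hco : {m | m ≠ 0 ∧ ∀ n, m ∉ (t n).im}.Infinite :=
    (Set.infinite_range_of_injective (hM.injective.comp (add_left_injective 1))).mono <| by
      rintro _ ⟨k, rfl⟩
      exact ⟨((Nat.zero_le _).trans_lt (hM k.succ_pos)).ne', hfresh k⟩
  obtain ⟨w, hw, hwim⟩ :=
    exists_upperBound_of_monotone (monotone_nat_of_le_succ fun n => (spec n).1.1) hco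
  have hwabove : ∀ n, ExtAbove (M n) (t n) w := fun n => ⟨hw n, fun v ⟨hvw, hvn⟩ => by
    obtain ⟨k, hk⟩ := Set.mem_iUnion.1 (hwim hvw)
    rcases le_total k n with h | h
    · exact absurd (im_mono (hext _ _ h).1 hk) hvn
    · exact (hext _ _ h).2 ⟨hk, hvn⟩⟩
  obtain ⟨s, hcs, hadj⟩ := (spec (c w)).2.2.2 w (hwabove _) rfl
  exact ⟨s, w, hadj w (hwabove (c w + 1)), hcs⟩

end CSeq

open CSeq in
/-- The graph `G` has no proper colouring `c : T → ℕ`, yet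
admits a proper colouring by countable ordinals (so `G` is uncountably
chromatic, of chromatic number `ℵ₁`); moreover every uncountable set of
vertices contains two vertices connected by only finitely many pairwise
internally disjoint paths in `G`. -/
theorem stmt12 :
    (¬ ∃ c : CSeq → ℕ, ∀ t t' : CSeq, G.Adj t t' → c t ≠ c t') ∧
    (∃ c : CSeq → {o : Ordinal // o < Ordinal.omega 1},
      ∀ t t' : CSeq, G.Adj t t' → c t ≠ c t') ∧
    ∀ A : Set CSeq, ¬ A.Countable →
      ∃ t ∈ A, ∃ t' ∈ A, t ≠ t' ∧
        ∀ P : Set (G.Path t t'),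
          (∀ p ∈ P, ∀ q ∈ P, p ≠ q → InternallyDisjoint p q) → P.Finite := by
  refine ⟨fun ⟨c, hc⟩ => ?_, ?_, fun A hA => ?_⟩
  · obtain ⟨s, t, hadj, hst⟩ := exists_adj_eq_of_nat c
    exact hc s t hadj hst
  · exact ⟨fun t => ⟨Ordinal.lift t.len, Ordinal.lift_lt_omega_one.2 t.len_countable⟩,
      fun t t' hadj h => len_ne_of_adj hadj (Ordinal.lift_inj.1 (congrArg Subtype.val h))⟩
  · have hA' : ¬ IsChain (· ≤ ·) A := fun h => hA (countable_of_isChain h)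
    simp only [IsChain, Set.Pairwise, not_forall, not_or] at hA'
    obtain ⟨t, ht, t', ht', hne, h, h'⟩ := hA'
    exact ⟨t, ht, t', ht', hne, fun P hP => finite_internallyDisjoint_of_not_le h h' hP⟩
end
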